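/- arXiv:2002.02677 — 3 statements merged into one kernel-verified Lean document; each statement's English description precedes it below -/
import Mathlib

section
/- Let n and r be positive integers and let Θ be a Hermitian positive definite matrix on ℂⁿ⊗ℂʳ, with partial trace ω over the second factor. Then det Θ and det ω are positive real numbers and det Θ ≤ r^{-nr}·(det ω)^r. -/
open Matrix ComplexOrder
open scoped Kronecker

/-!
Write `ω⁻¹ ⊗ 1 = Cᴴ C`. Then `C Θ Cᴴ` is positive semidefinite, its trace is
`tr ((ω⁻¹ ⊗ 1) Θ) = tr (ω⁻¹ ω) = n` and its determinant is `det Θ / (det ω) ^ r`.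
AM–GM on its `n r` eigenvalues bounds this determinant by `(n / (n r)) ^ (n r) = r ^ (-n r)`.
-/

theorem Real.prod_le_sum_div_card_pow {ι : Type*} [Fintype ι] (f : ι → ℝ)
    (hf : ∀ i, 0 ≤ f i) :
    ∏ i, f i ≤ ((∑ i, f i) / Fintype.card ι) ^ Fintype.card ι := by
  rcases isEmpty_or_nonempty ι with _ | _
  · simp
  set c := Fintype.card ι
  have hc : c ≠ 0 := Fintype.card_ne_zero
  have amgm := Real.geom_mean_le_arith_mean_weighted Finset.univ (fun _ ↦ (c : ℝ)⁻¹) f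
    (fun _ _ ↦ by positivity) (by simp [c, hc]) (fun i _ ↦ hf i)
  calc ∏ i, f i = (∏ i, f i ^ (c⁻¹ : ℝ)) ^ c := by
        rw [← Finset.prod_pow]
        exact Finset.prod_congr rfl fun i _ ↦ (Real.rpow_inv_natCast_pow (hf i) hc).symm
    _ ≤ ((∑ i, f i) / c) ^ c := by
        gcongr
        · exact Finset.prod_nonneg fun i _ ↦ Real.rpow_nonneg (hf i) _
        · simpa [← Finset.mul_sum, inv_mul_eq_div, Finset.sum_div] using amgm

namespace Matrix

section DetTrace

variable {𝕜 n : Type*} [RCLike 𝕜] [Fintype n] [DecidableEq n]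

theorem PosSemidef.re_det_le_re_trace_div_card_pow {A : Matrix n n 𝕜} (hA : A.PosSemidef) :
    RCLike.re A.det ≤ (RCLike.re A.trace / Fintype.card n) ^ Fintype.card n := by
  rw [hA.1.det_eq_prod_eigenvalues, hA.1.trace_eq_sum_eigenvalues, ← RCLike.ofReal_prod,
    ← RCLike.ofReal_sum, RCLike.ofReal_re, RCLike.ofReal_re]
  exact Real.prod_le_sum_div_card_pow _ hA.eigenvalues_nonneg

open scoped MatrixOrder in
theorem PosSemidef.re_det_mul_le_re_trace_mul_div_card_pow {A B : Matrix n n 𝕜}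
    (hA : A.PosSemidef) (hB : B.PosSemidef) :
    RCLike.re (A * B).det ≤ (RCLike.re (A * B).trace / Fintype.card n) ^ Fintype.card n := by
  obtain ⟨C, rfl⟩ := CStarAlgebra.nonneg_iff_eq_star_mul_self.mp hA.nonneg
  rw [star_eq_conjTranspose, mul_assoc, det_mul_comm, trace_mul_comm]
  exact (hB.mul_mul_conjTranspose_same C).re_det_le_re_trace_div_card_pow

end DetTrace

def partialTraceRight {m n r R : Type*} [Fintype r] [AddCommMonoid R]
    (Θ : Matrix (m × r) (n × r) R) : Matrix m n R :=
  of fun j k ↦ ∑ l, Θ (j, l) (k, l)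

section PartialTrace

variable {m r R : Type*} [Fintype r]

theorem partialTraceRight_eq_sum_submatrix [AddCommMonoid R] (Θ : Matrix (m × r) (m × r) R) :
    Θ.partialTraceRight = ∑ l, Θ.submatrix (·, l) (·, l) := by
  ext j k
  simp [partialTraceRight, Matrix.sum_apply]

theorem PosDef.partialTraceRight [Nonempty r] [Ring R] [PartialOrder R] [StarRing R]
    [AddLeftMono R] {Θ : Matrix (m × r) (m × r) R} (hΘ : Θ.PosDef) :
    Θ.partialTraceRight.PosDef := by
  rw [partialTraceRight_eq_sum_submatrix]
  exact posDef_sum Finset.univ_nonempty fun l _ ↦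
    hΘ.submatrix fun _ _ h ↦ (Prod.mk.inj h).1

theorem trace_kronecker_one_mul [Fintype m] [DecidableEq r] [CommSemiring R]
    (B : Matrix m m R) (Θ : Matrix (m × r) (m × r) R) :
    (B ⊗ₖ (1 : Matrix r r R) * Θ).trace = (B * Θ.partialTraceRight).trace := by
  simp only [trace, diag_apply, mul_apply, kroneckerMap_apply, one_apply, mul_ite, mul_one,
    mul_zero, ite_mul, zero_mul, Fintype.sum_prod_type, Finset.sum_ite_eq, Finset.mem_univ,
    ↓reduceIte, partialTraceRight, of_apply, Finset.mul_sum]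
  exact Finset.sum_congr rfl fun _ _ ↦ Finset.sum_comm

theorem PosDef.re_det_le_inv_card_pow_mul_re_det_partialTraceRight_pow {𝕜 : Type*} [RCLike 𝕜]
    [Fintype m] [DecidableEq m] [DecidableEq r] [Nonempty r]
    {Θ : Matrix (m × r) (m × r) 𝕜} (hΘ : Θ.PosDef) :
    RCLike.re Θ.det ≤ ((Fintype.card r : ℝ) ^ (Fintype.card m * Fintype.card r))⁻¹ *
      RCLike.re Θ.partialTraceRight.det ^ Fintype.card r := by
  set a := Fintype.card m
  set b := Fintype.card r
  set ω := Θ.partialTraceRight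
  have hω : ω.PosDef := hΘ.partialTraceRight
  obtain ⟨D, hD, hDω⟩ := RCLike.pos_iff_exists_ofReal.mp hω.det_pos
  have htrace : RCLike.re (ω⁻¹ ⊗ₖ (1 : Matrix r r 𝕜) * Θ).trace = a := by
    rw [trace_kronecker_one_mul, nonsing_inv_mul _ (isUnit_iff_ne_zero.mpr hω.det_pos.ne'),
      trace_one, RCLike.natCast_re]
  have hdet :
      RCLike.re (ω⁻¹ ⊗ₖ (1 : Matrix r r 𝕜) * Θ).det = (D ^ b)⁻¹ * RCLike.re Θ.det := by
    rw [det_mul, det_kronecker, det_one, one_pow, mul_one, det_nonsing_inv, ← hDω,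
      Ring.inverse_eq_inv', ← RCLike.ofReal_inv, ← RCLike.ofReal_pow, RCLike.re_ofReal_mul,
      inv_pow]
  have hmean : ((a : ℝ) / (a * b)) ^ (a * b) = ((b : ℝ) ^ (a * b))⁻¹ := by
    rcases a.eq_zero_or_pos with ha | ha
    · simp [ha]
    · rw [← inv_pow]
      field_simp
  have key := PosSemidef.re_det_mul_le_re_trace_mul_div_card_pow
    (hω.inv.posSemidef.kronecker (PosSemidef.one (n := r))) hΘ.posSemidef
  rw [htrace, hdet, Fintype.card_prod, Nat.cast_mul, hmean,
    inv_mul_le_iff₀ (pow_pos hD b)] at key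
  rwa [← hDω, RCLike.ofReal_re, mul_comm]

end PartialTrace

end Matrix

theorem stmt_0_general (n r : ℕ) (hr : 0 < r)
    (Θ : Matrix (Fin n × Fin r) (Fin n × Fin r) ℂ) (hΘ : Θ.PosDef)
    (ω : Matrix (Fin n) (Fin n) ℂ)
    (hω : ω = Matrix.of fun j k : Fin n => ∑ l : Fin r, Θ (j, l) (k, l)) :
    (0 < Θ.det.re ∧ Θ.det.im = 0) ∧ (0 < ω.det.re ∧ ω.det.im = 0) ∧
      Θ.det.re ≤ ((r : ℝ) ^ (n * r))⁻¹ * ω.det.re ^ r := by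
  obtain rfl : ω = Θ.partialTraceRight := hω
  have : Nonempty (Fin r) := Fin.pos_iff_nonempty.mp hr
  obtain ⟨hΘre, hΘim⟩ := Complex.pos_iff.mp hΘ.det_pos
  obtain ⟨hωre, hωim⟩ := Complex.pos_iff.mp hΘ.partialTraceRight.det_pos
  refine ⟨⟨hΘre, hΘim.symm⟩, ⟨hωre, hωim.symm⟩, ?_⟩
  simpa using hΘ.re_det_le_inv_card_pow_mul_re_det_partialTraceRight_pow

/-- **Pointwise content of Proposition 3.2**: if `Θ` is a Hermitian positive definite
matrix on `ℂⁿ ⊗ ℂʳ` and `ω` is its partial trace over the second factor, then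
`det Θ` and `det ω` are positive reals and `det Θ ≤ r^{-nr} (det ω)^r`. -/
theorem stmt_0 (n r : ℕ) (hn : 0 < n) (hr : 0 < r)
    (Θ : Matrix (Fin n × Fin r) (Fin n × Fin r) ℂ) (hΘ : Θ.PosDef)
    (ω : Matrix (Fin n) (Fin n) ℂ)
    (hω : ω = Matrix.of fun j k : Fin n => ∑ l : Fin r, Θ (j, l) (k, l)) :
    (0 < Θ.det.re ∧ Θ.det.im = 0) ∧ (0 < ω.det.re ∧ ω.det.im = 0) ∧
      Θ.det.re ≤ ((r : ℝ) ^ (n * r))⁻¹ * ω.det.re ^ r :=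
  stmt_0_general n r hr Θ hΘ ω hω
end

section
/- Let n and r be positive integers, let Θ be a Hermitian positive definite matrix on ℂⁿ⊗ℂʳ, let ξ ∈ ℂⁿ be nonzero, and let c₀ > 0 be a real constant. Then the ℝ-linear map σ : Herm_r → ℝ × Herm°_r defined by σ(u) = (c₀·Σ_{λ,μ} A(ξ)_{λ,μ} u_{λ,μ}, (|ξ|²/n)·u°) — whose first component is a real number since A(ξ) and u are Hermitian — is a linear isomorphism of real vector spaces. -/
open Matrix ComplexOrder

private lemma coe_smul_mat {r : ℕ} (a : ℝ) (M : Matrix (Fin r) (Fin r) ℂ) :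
    (a : ℂ) • M = a • M := by
  rw [← smul_one_smul ℂ a M, Complex.real_smul, mul_one]

private lemma herm_smul {r : ℕ} (a : ℝ) {M : Matrix (Fin r) (Fin r) ℂ}
    (h : M.IsHermitian) : (a • M).IsHermitian :=
  IsSelfAdjoint.smul (star_trivial a) h.isSelfAdjoint

/-- Invertibility of the principal symbol in Theorem 2.11 (case where `G` does not depend
on second derivatives): for `Θ` Hermitian positive definite on `ℂⁿ ⊗ ℂʳ`, `ξ ≠ 0` and
`c₀ > 0`, the map `σ(u) = (c₀ ∑ A(ξ)_{λμ} u_{λμ}, (|ξ|²/n) u°)` is an `ℝ`-linear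
isomorphism from the Hermitian `r × r` matrices onto `ℝ × {trace-free Hermitian}`. -/
theorem stmt_7 (n r : ℕ) (hn : 0 < n) (hr : 0 < r)
    (Θ : Matrix (Fin n × Fin r) (Fin n × Fin r) ℂ) (hΘ : Θ.PosDef)
    (ξ : Fin n → ℂ) (hξ : ξ ≠ 0) (c₀ : ℝ) (hc₀ : 0 < c₀)
    (A : Matrix (Fin r) (Fin r) ℂ)
    (hA : A = Matrix.of fun l m : Fin r =>
      ∑ j : Fin n, ∑ k : Fin n, Θ (j, l) (k, m) * ξ j * (starRingEnd ℂ) (ξ k))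
    (σ : Matrix (Fin r) (Fin r) ℂ → ℝ × Matrix (Fin r) (Fin r) ℂ)
    (hσ : σ = fun u =>
      (c₀ * (∑ l : Fin r, ∑ m : Fin r, A l m * u l m).re,
        ((∑ j : Fin n, ‖ξ j‖ ^ 2) / (n : ℝ)) •
          (u - (u.trace / (r : ℂ)) • (1 : Matrix (Fin r) (Fin r) ℂ)))) :
    (∀ u v : Matrix (Fin r) (Fin r) ℂ, σ (u + v) = σ u + σ v) ∧
    (∀ (c : ℝ) (u : Matrix (Fin r) (Fin r) ℂ), σ (c • u) = c • σ u) ∧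
    Set.BijOn σ {u : Matrix (Fin r) (Fin r) ℂ | u.IsHermitian}
      {p : ℝ × Matrix (Fin r) (Fin r) ℂ | p.2.IsHermitian ∧ p.2.trace = 0} := by
  have : Nonempty (Fin r) := ⟨⟨0, hr⟩⟩
  have hrC : (r : ℂ) ≠ 0 := Nat.cast_ne_zero.mpr hr.ne'
  set s : ℝ := (∑ j : Fin n, ‖ξ j‖ ^ 2) / (n : ℝ) with hs_def
  have hs : 0 < s := by
    apply div_pos _ (by exact_mod_cast hn)
    obtain ⟨j, hj⟩ := Function.ne_iff.mp hξ
    exact Finset.sum_pos' (fun i _ => by positivity)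
      ⟨j, Finset.mem_univ j, pow_pos (norm_pos_iff.mpr hj) 2⟩
  -- trace of A is positive
  have htr : 0 < A.trace := by
    rw [hA, Matrix.trace]
    apply Finset.sum_pos _ Finset.univ_nonempty
    intro l _
    show (0 : ℂ) < ∑ j : Fin n, ∑ k : Fin n, Θ (j, l) (k, l) * ξ j * (starRingEnd ℂ) (ξ k)
    set x : Fin n × Fin r → ℂ := fun q => if q.2 = l then (starRingEnd ℂ) (ξ q.1) else 0
      with hxdef
    have hx : x ≠ 0 := by
      obtain ⟨j, hj⟩ := Function.ne_iff.mp hξ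
      intro h
      apply hj
      have := congr_fun h (j, l)
      simpa [hxdef] using this
    have := (Matrix.posDef_iff_dotProduct_mulVec.mp hΘ).2 hx
    convert this using 1
    simp only [dotProduct, mulVec, Fintype.sum_prod_type, hxdef, Pi.star_apply]
    simp [mul_ite, ite_mul, apply_ite (starRingEnd ℂ), Finset.sum_ite_eq',
      Finset.mul_sum, mul_comm, mul_assoc, mul_left_comm]
  have hT : 0 < A.trace.re := (Complex.pos_iff.mp htr).1
  -- linearity of u ↦ ∑ A l m * u l m
  have Ladd : ∀ u v : Matrix (Fin r) (Fin r) ℂ,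
      (∑ l : Fin r, ∑ m : Fin r, A l m * (u + v) l m)
        = (∑ l : Fin r, ∑ m : Fin r, A l m * u l m)
          + (∑ l : Fin r, ∑ m : Fin r, A l m * v l m) := by
    intro u v
    simp [Matrix.add_apply, mul_add, Finset.sum_add_distrib]
  have Lsmul : ∀ (z : ℂ) (u : Matrix (Fin r) (Fin r) ℂ),
      (∑ l : Fin r, ∑ m : Fin r, A l m * (z • u) l m)
        = z * ∑ l : Fin r, ∑ m : Fin r, A l m * u l m := by
    intro z u
    simp [Matrix.smul_apply, Finset.mul_sum, smul_eq_mul, mul_left_comm]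
  have Lone : ∀ z : ℂ,
      (∑ l : Fin r, ∑ m : Fin r, A l m * (z • (1 : Matrix (Fin r) (Fin r) ℂ)) l m)
        = z * A.trace := by
    intro z
    simp [Matrix.smul_apply, Matrix.one_apply, mul_ite, Finset.sum_ite_eq,
      Matrix.trace, Matrix.diag, Finset.mul_sum, mul_comm]
  refine ⟨?_, ?_, ?_, ?_, ?_⟩
  · -- additivity
    intro u v
    rw [hσ]
    dsimp only
    refine Prod.ext ?_ ?_
    · show c₀ * (∑ l : Fin r, ∑ m : Fin r, A l m * (u + v) l m).re = _
      rw [Ladd, Complex.add_re, mul_add]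
      rfl
    · show s • _ = s • _ + s • _
      rw [Matrix.trace_add, ← smul_add]
      congr 1
      rw [add_div, add_smul]
      abel
  · -- ℝ-homogeneity
    intro c u
    rw [hσ]
    dsimp only
    rw [← coe_smul_mat c u]
    refine Prod.ext ?_ ?_
    · show c₀ * (∑ l : Fin r, ∑ m : Fin r, A l m * ((c : ℂ) • u) l m).re
        = c • (c₀ * (∑ l : Fin r, ∑ m : Fin r, A l m * u l m).re)
      rw [Lsmul, Complex.re_ofReal_mul, smul_eq_mul]
      ring
    · show s • _ = c • (s • _)
      rw [Matrix.trace_smul, smul_eq_mul]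
      have h5 : ((c : ℂ) • u) - (((c : ℂ) * u.trace) / (r : ℂ)) • 1
          = (c : ℂ) • (u - (u.trace / (r : ℂ)) • (1 : Matrix (Fin r) (Fin r) ℂ)) := by
        rw [smul_sub, mul_div_assoc, smul_smul]
      rw [h5, coe_smul_mat, smul_comm]
  · -- MapsTo
    intro u hu
    have htru : star u.trace = u.trace := by
      rw [← Matrix.trace_conjTranspose, hu]
    rw [hσ]
    dsimp only
    constructor
    · show (s • (u - (u.trace / (r : ℂ)) • (1 : Matrix (Fin r) (Fin r) ℂ))).IsHermitian
      have h1 : ((u.trace / (r : ℂ)) • (1 : Matrix (Fin r) (Fin r) ℂ)).IsHermitian := by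
        rw [Matrix.IsHermitian, Matrix.conjTranspose_smul, Matrix.conjTranspose_one,
          star_div₀, htru, star_natCast]
      exact herm_smul s (hu.sub h1)
    · show (s • (u - (u.trace / (r : ℂ)) • (1 : Matrix (Fin r) (Fin r) ℂ))).trace = 0
      rw [Matrix.trace_smul, Matrix.trace_sub, Matrix.trace_smul, Matrix.trace_one]
      simp only [Fintype.card_fin, smul_eq_mul]
      rw [div_mul_cancel₀ _ hrC, sub_self, smul_zero]
  · -- InjOn
    intro u hu v hv heq
    rw [hσ] at heq
    obtain ⟨h1, h2⟩ := Prod.ext_iff.mp heq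
    dsimp only at h1 h2
    have h3 : u - (u.trace / (r : ℂ)) • 1 = v - (v.trace / (r : ℂ)) • 1 :=
      smul_right_injective (Matrix (Fin r) (Fin r) ℂ) hs.ne' h2
    set d : ℂ := (u.trace - v.trace) / (r : ℂ) with hd_def
    have h4 : u = v + d • 1 := by
      have h5 : u - v = d • (1 : Matrix (Fin r) (Fin r) ℂ) := by
        rw [hd_def, sub_div, sub_smul]
        rw [sub_eq_sub_iff_sub_eq_sub] at h3
        exact h3
      rw [← h5]
      abel
    have htru : star u.trace = u.trace := by rw [← Matrix.trace_conjTranspose, hu]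
    have htrv : star v.trace = v.trace := by rw [← Matrix.trace_conjTranspose, hv]
    have hdim : d.im = 0 := by
      have : star d = d := by rw [hd_def, star_div₀, star_sub, htru, htrv, star_natCast]
      exact Complex.conj_eq_iff_im.mp this
    have h6 : (∑ l : Fin r, ∑ m : Fin r, A l m * u l m).re
        = (∑ l : Fin r, ∑ m : Fin r, A l m * v l m).re :=
      mul_left_cancel₀ hc₀.ne' h1
    rw [h4, Ladd, Lone, Complex.add_re, Complex.mul_re, hdim] at h6
    have h7 : d.re * A.trace.re = 0 := by linarith
    have h8 : d = 0 := by
      apply Complex.ext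
      · have := mul_eq_zero.mp h7
        rcases this with h | h
        · exact h
        · exact absurd h hT.ne'
      · simpa using hdim
    rw [h4, h8, zero_smul, add_zero]
  · -- SurjOn
    rintro ⟨t, w⟩ ⟨hw, hw0⟩
    set b : ℝ := (∑ l : Fin r, ∑ m : Fin r, A l m * w l m).re with hb_def
    set c : ℝ := (t / c₀ - s⁻¹ * b) / A.trace.re with hc_def
    refine ⟨s⁻¹ • w + c • (1 : Matrix (Fin r) (Fin r) ℂ), ?_, ?_⟩
    · exact (herm_smul s⁻¹ hw).add (herm_smul c Matrix.isHermitian_one)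
    · set u : Matrix (Fin r) (Fin r) ℂ := s⁻¹ • w + c • 1 with hu_def
      have htu : u.trace = (c : ℂ) * (r : ℂ) := by
        rw [hu_def, Matrix.trace_add, Matrix.trace_smul, Matrix.trace_smul, hw0,
          smul_zero, zero_add, Matrix.trace_one]
        simp [Complex.real_smul]
      rw [hσ]
      dsimp only
      refine Prod.ext ?_ ?_
      · show c₀ * (∑ l : Fin r, ∑ m : Fin r, A l m * u l m).re = t
        have hsum : (∑ l : Fin r, ∑ m : Fin r, A l m * u l m)
            = ((s⁻¹ : ℝ) : ℂ) * (∑ l : Fin r, ∑ m : Fin r, A l m * w l m)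
              + (c : ℂ) * A.trace := by
          rw [hu_def, ← coe_smul_mat s⁻¹ w, ← coe_smul_mat c 1, Ladd, Lsmul, Lone]
        rw [hsum, Complex.add_re, Complex.re_ofReal_mul, Complex.re_ofReal_mul, ← hb_def,
          hc_def]
        field_simp
        ring
      · show s • (u - (u.trace / (r : ℂ)) • (1 : Matrix (Fin r) (Fin r) ℂ)) = w
        rw [htu, mul_div_cancel_right₀ _ hrC, hu_def, coe_smul_mat, add_sub_cancel_right,
          smul_smul, mul_inv_cancel₀ hs.ne', one_smul]
end

section
/- Let n and r be positive integers, let Θ be a Hermitian positive definite matrix on ℂⁿ⊗ℂʳ, let ξ ∈ ℂⁿ satisfy Σ_j |ξ_j|² = 1, and let c₀ > 0. Let σ : Herm_r → ℝ × Herm°_r be the bijective ℝ-linear map σ(u) = (c₀·Σ_{λ,μ} A(ξ)_{λ,μ} u_{λ,μ}, (1/n)·u°). Then there exists a constant C > 0 such that for every τ ∈ ℝ and every v ∈ Herm°_r, the inverse satisfies ‖σ⁻¹(τ,v)‖² ≤ n²(r² + 1)·(C·τ² + ‖v‖²), where ‖·‖ denotes the Hilbert–Schmidt (Frobenius) norm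 on Herm_r and Herm°_r. -/
open Matrix ComplexOrder

set_option maxHeartbeats 1000000 in
/-- Quantitative bound on the inverse of the principal symbol (key estimate in the proof
of Theorem 2.11): for `|ξ| = 1` there is a constant `C > 0` such that any Hermitian `u`
with `σ(u) = (τ, v)` satisfies `‖u‖² ≤ n²(r²+1)(C τ² + ‖v‖²)` (Hilbert–Schmidt norms). -/
theorem stmt_8 (n r : ℕ) (hn : 0 < n) (hr : 0 < r)
    (Θ : Matrix (Fin n × Fin r) (Fin n × Fin r) ℂ) (hΘ : Θ.PosDef)
    (ξ : Fin n → ℂ) (hξ : ∑ j : Fin n, ‖ξ j‖ ^ 2 = 1)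
    (c₀ : ℝ) (hc₀ : 0 < c₀)
    (A : Matrix (Fin r) (Fin r) ℂ)
    (hA : A = Matrix.of fun l m : Fin r =>
      ∑ j : Fin n, ∑ k : Fin n, Θ (j, l) (k, m) * ξ j * (starRingEnd ℂ) (ξ k))
    (σ : Matrix (Fin r) (Fin r) ℂ → ℝ × Matrix (Fin r) (Fin r) ℂ)
    (hσ : σ = fun u =>
      (c₀ * (∑ l : Fin r, ∑ m : Fin r, A l m * u l m).re,
        ((1 : ℝ) / (n : ℝ)) •
          (u - (u.trace / (r : ℂ)) • (1 : Matrix (Fin r) (Fin r) ℂ)))) :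
    ∃ C : ℝ, 0 < C ∧ ∀ (τ : ℝ) (v : Matrix (Fin r) (Fin r) ℂ),
      v.IsHermitian → v.trace = 0 →
      ∀ u : Matrix (Fin r) (Fin r) ℂ, u.IsHermitian → σ u = (τ, v) →
        ∑ l : Fin r, ∑ m : Fin r, ‖u l m‖ ^ 2 ≤
          (n : ℝ) ^ 2 * ((r : ℝ) ^ 2 + 1) *
            (C * τ ^ 2 + ∑ l : Fin r, ∑ m : Fin r, ‖v l m‖ ^ 2) := by
  classical
  subst hσ
  -- positivity of the contracted quadratic form
  have hpos : ∀ x : Fin r → ℂ, x ≠ 0 →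
      0 < ∑ l : Fin r, ∑ m : Fin r, A l m * x l * (starRingEnd ℂ) (x m) := by
    subst hA
    obtain ⟨j₀, hj₀⟩ : ∃ j, ξ j ≠ 0 := by
      by_contra h; push_neg at h
      simp only [h, norm_zero] at hξ
      simp at hξ
    intro x hx
    obtain ⟨l₀, hl₀⟩ : ∃ l, x l ≠ 0 := by
      by_contra h; push_neg at h; exact hx (funext h)
    set y : Fin n × Fin r → ℂ := fun p => (starRingEnd ℂ) (ξ p.1 * x p.2) with hy
    have hy0 : y ≠ 0 := by
      intro h
      have := congrFun h (j₀, l₀)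
      simp [hy] at this
      tauto
    have hpos := hΘ.dotProduct_mulVec_pos hy0
    have heq : (∑ l : Fin r, ∑ m : Fin r,
        (Matrix.of fun l m : Fin r =>
          ∑ j : Fin n, ∑ k : Fin n, Θ (j, l) (k, m) * ξ j * (starRingEnd ℂ) (ξ k)) l m
          * x l * (starRingEnd ℂ) (x m)) = dotProduct (star y) (Θ *ᵥ y) := by
      simp only [dotProduct, mulVec, Pi.star_apply, hy, Fintype.sum_prod_type, of_apply,
        Finset.sum_mul, Finset.mul_sum, _root_.map_mul, RingHomCompTriple.comp_apply,
        RingHom.id_apply, starRingEnd_self_apply, Complex.star_def]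
      rw [Finset.sum_comm]
      conv_lhs => enter [2, m]; rw [Finset.sum_comm]
      rw [Finset.sum_comm]
      conv_lhs => enter [2, j]; rw [Finset.sum_comm]
      conv_lhs => enter [2, j, 2, l]; rw [Finset.sum_comm]
      refine Finset.sum_congr rfl fun j _ => ?_
      refine Finset.sum_congr rfl fun l _ => ?_
      refine Finset.sum_congr rfl fun k _ => ?_
      refine Finset.sum_congr rfl fun m _ => ?_
      ring
    rw [heq]; exact hpos
  -- A is Hermitian
  have hAherm : ∀ l m, A m l = (starRingEnd ℂ) (A l m) := by
    intro l m
    rw [hA]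
    simp only [of_apply, map_sum, _root_.map_mul, RingHomCompTriple.comp_apply,
      RingHom.id_apply, starRingEnd_self_apply]
    rw [Finset.sum_comm]
    refine Finset.sum_congr rfl fun k _ => Finset.sum_congr rfl fun j _ => ?_
    have hherm : (starRingEnd ℂ) (Θ (k, l) (j, m)) = Θ (j, m) (k, l) := by
      have := congrFun (congrFun hΘ.1 (j, m)) (k, l)
      simpa [conjTranspose_apply] using this
    rw [hherm]
    ring
  -- the quadratic form at a two-point vector
  have hform2 : ∀ (l m : Fin r), l ≠ m → ∀ c d : ℂ,
      (∑ p : Fin r, ∑ q : Fin r,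
        A p q * (Pi.single l c + Pi.single m d : Fin r → ℂ) p
          * (starRingEnd ℂ) ((Pi.single l c + Pi.single m d : Fin r → ℂ) q)) =
      A l l * (c * (starRingEnd ℂ) c) + A l m * (c * (starRingEnd ℂ) d)
        + A m l * (d * (starRingEnd ℂ) c) + A m m * (d * (starRingEnd ℂ) d) := by
    intro l m hlm c d
    simp only [Pi.add_apply, Pi.single_apply, map_add, apply_ite (starRingEnd ℂ), map_zero,
      mul_add, add_mul, ite_mul, mul_ite, mul_zero, zero_mul, Finset.sum_add_distrib,
      Finset.sum_ite_eq', Finset.mem_univ, if_true]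
    ring
  -- diagonal entries are real and positive
  set a : Fin r → ℝ := fun l => (A l l).re with ha
  have hdiag : ∀ l, A l l = ((a l : ℝ) : ℂ) ∧ 0 < a l := by
    intro l
    have hne : (Pi.single l (1:ℂ) : Fin r → ℂ) ≠ 0 := by
      intro h
      have := congrFun h l
      simp at this
    have hp := hpos _ hne
    have he : (∑ p : Fin r, ∑ q : Fin r,
        A p q * (Pi.single l (1:ℂ) : Fin r → ℂ) p
          * (starRingEnd ℂ) ((Pi.single l (1:ℂ) : Fin r → ℂ) q)) = A l l := by
      simp [Pi.single_apply, apply_ite (starRingEnd ℂ), ite_mul, mul_ite,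
        Finset.sum_ite_eq', Finset.mem_univ]
    rw [he] at hp
    rw [Complex.lt_def] at hp
    obtain ⟨hre, him⟩ := hp
    constructor
    · apply Complex.ext <;> simp [ha, ← him]
    · simpa [ha] using hre
  -- entrywise bound
  have hAbd : ∀ l m, ‖A l m‖ ^ 2 ≤ a l * a m := by
    intro l m
    by_cases hlm : l = m
    · subst hlm
      rw [(hdiag l).1]
      simp [sq_abs, Complex.normSq_ofReal, sq]
    · set c : ℂ := -(starRingEnd ℂ) (A l m) with hc
      set d : ℂ := ((a l : ℝ) : ℂ) with hd
      have hxne : (Pi.single l c + Pi.single m d : Fin r → ℂ) ≠ 0 := by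
        intro h
        have := congrFun h m
        simp [Pi.single_apply, Ne.symm hlm, hd] at this
        exact absurd this (ne_of_gt (hdiag l).2)
      have hp := hpos _ hxne
      rw [hform2 l m hlm c d] at hp
      rw [Complex.lt_def] at hp
      obtain ⟨hre, -⟩ := hp
      have hexp : (A l l * (c * (starRingEnd ℂ) c) + A l m * (c * (starRingEnd ℂ) d)
          + A m l * (d * (starRingEnd ℂ) c) + A m m * (d * (starRingEnd ℂ) d)) =
          (((a l * (Complex.normSq (A l m)) - 2 * a l * Complex.normSq (A l m)
            + a m * (a l)^2 : ℝ)) : ℂ) := by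
        rw [(hdiag l).1, (hdiag m).1, hAherm l m, hc, hd]
        have h1 : ∀ z : ℂ, z * (starRingEnd ℂ) z = (Complex.normSq z : ℂ) := by
          intro z; rw [mul_comm]; exact (Complex.normSq_eq_conj_mul_self).symm
        push_cast
        simp only [map_neg, _root_.map_mul, Complex.conj_conj]
        rw [Complex.conj_ofReal]
        ring_nf
        rw [mul_assoc, ← Complex.normSq_eq_conj_mul_self]
      rw [hexp] at hre
      simp only [Complex.zero_re, Complex.ofReal_re] at hre
      have hal := (hdiag l).2
      have : Complex.normSq (A l m) < a l * a m := by nlinarith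
      rw [Complex.sq_norm]
      exact this.le
  set T : ℝ := ∑ l, a l with hT
  have hTpos : 0 < T := Finset.sum_pos (fun l _ => (hdiag l).2) ⟨⟨0, hr⟩, Finset.mem_univ _⟩
  have hA2 : (∑ l : Fin r, ∑ m : Fin r, ‖A l m‖ ^ 2) ≤ T ^ 2 := by
    calc (∑ l : Fin r, ∑ m : Fin r, ‖A l m‖ ^ 2)
        ≤ ∑ l : Fin r, ∑ m : Fin r, a l * a m :=
          Finset.sum_le_sum fun l _ => Finset.sum_le_sum fun m _ => hAbd l m
      _ = T ^ 2 := by rw [hT, sq, Finset.sum_mul_sum]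
  refine ⟨2 * r / (c₀ ^ 2 * T ^ 2), by positivity, ?_⟩
  intro τ v hvh hvtr u huh hσu
  set R : ℝ := (r : ℝ) with hR
  set N : ℝ := (n : ℝ) with hN
  have hR1 : (1:ℝ) ≤ R := by rw [hR]; exact_mod_cast hr
  have hN1 : (1:ℝ) ≤ N := by rw [hN]; exact_mod_cast hn
  have hRpos : (0:ℝ) < R := lt_of_lt_of_le one_pos hR1
  have h1 : c₀ * (∑ l : Fin r, ∑ m : Fin r, A l m * u l m).re = τ :=
    congrArg Prod.fst hσu
  have h2 : ((1 : ℝ) / (n : ℝ)) •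
      (u - (u.trace / (r : ℂ)) • (1 : Matrix (Fin r) (Fin r) ℂ)) = v :=
    congrArg Prod.snd hσu
  -- trace of u is real
  have htr_re : u.trace = ((u.trace.re : ℝ) : ℂ) := by
    have hc : (starRingEnd ℂ) u.trace = u.trace := by
      rw [trace]
      rw [map_sum]
      refine Finset.sum_congr rfl fun l _ => ?_
      have := congrFun (congrFun huh l) l
      simpa [conjTranspose_apply] using this
    exact (Complex.conj_eq_iff_re.mp hc).symm
  set t : ℝ := u.trace.re / r with htdef
  -- entrywise decomposition of u
  have hentry : ∀ l m, u l m = ((N:ℝ) : ℂ) * v l m + (if l = m then ((t : ℝ) : ℂ) else 0) := by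
    intro l m
    have h := congrFun (congrFun h2 l) m
    simp only [Matrix.smul_apply, Matrix.sub_apply, Matrix.smul_apply, smul_eq_mul,
      Complex.real_smul, Matrix.one_apply] at h
    have hn0 : ((n:ℝ) : ℂ) ≠ 0 := by
      simp only [ne_eq, Complex.ofReal_natCast, Nat.cast_eq_zero]
      omega
    have hrc : ((r:ℕ):ℂ) ≠ 0 := Nat.cast_ne_zero.mpr hr.ne'
    rw [← h, htr_re, htdef]
    simp only [hN]
    push_cast
    split_ifs with hlm
    · field_simp
      ring
    · field_simp
      ring
  -- diagonal entries of v are real; trace condition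
  have hvd : ∀ l, v l l = (((v l l).re : ℝ) : ℂ) := by
    intro l
    have hc : (starRingEnd ℂ) (v l l) = v l l := by
      have := congrFun (congrFun hvh l) l
      simpa [conjTranspose_apply] using this
    exact (Complex.conj_eq_iff_re.mp hc).symm
  have hvtr0 : ∑ l, (v l l).re = 0 := by
    have := congrArg Complex.re hvtr
    simpa [trace, Matrix.diag, Complex.re_sum] using this
  set V : ℝ := ∑ l : Fin r, ∑ m : Fin r, ‖v l m‖ ^ 2 with hV
  have hVnn : 0 ≤ V := by positivity
  -- Hilbert–Schmidt norm identity
  have hperm : ∀ l m, ‖u l m‖ ^ 2 = N ^ 2 * ‖v l m‖ ^ 2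
      + (if l = m then 2 * N * t * (v l l).re + t ^ 2 else 0) := by
    intro l m
    rw [hentry l m]
    by_cases h : l = m
    · subst h
      simp only [eq_self_iff_true, if_true, ite_true]
      have hvre : Complex.normSq (v l l) = (v l l).re * (v l l).re := by
        conv_lhs => rw [hvd l]
        exact Complex.normSq_ofReal _
      have he : ((N:ℝ) : ℂ) * v l l + ((t : ℝ) : ℂ)
          = ((N * (v l l).re + t : ℝ) : ℂ) := by
        conv_lhs => rw [hvd l]
        push_cast; ring
      rw [he, Complex.sq_norm, Complex.sq_norm, Complex.normSq_ofReal, hvre]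
      ring
    · simp only [if_neg h, add_zero]
      rw [norm_mul, mul_pow, Complex.sq_norm (((N:ℝ):ℂ)), Complex.normSq_ofReal]
      have : N * N = N ^ 2 := by ring
      nlinarith [norm_nonneg (v l m)]
  have hnorm : (∑ l : Fin r, ∑ m : Fin r, ‖u l m‖ ^ 2)
      = N ^ 2 * V + R * t ^ 2 := by
    simp only [hperm, Finset.sum_add_distrib]
    congr 1
    · rw [hV, Finset.mul_sum]
      exact Finset.sum_congr rfl fun l _ => by rw [Finset.mul_sum]
    · have hcol : ∀ l : Fin r,
          (∑ m : Fin r, if l = m then 2*N*t*(v l l).re + t^2 else 0)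
            = 2*N*t*(v l l).re + t^2 := by
        intro l; simp
      simp only [hcol]
      rw [Finset.sum_add_distrib, ← Finset.mul_sum, hvtr0]
      simp [hR, mul_comm]
  -- the symbol equation
  set S : ℝ := (∑ l : Fin r, ∑ m : Fin r, A l m * v l m).re with hS
  have hsum_split : (∑ l : Fin r, ∑ m : Fin r, A l m * u l m)
      = ((N:ℝ):ℂ) * (∑ l : Fin r, ∑ m : Fin r, A l m * v l m)
        + ((t:ℝ):ℂ) * ((T:ℝ):ℂ) := by
    simp only [hentry, mul_add, Finset.sum_add_distrib]
    congr 1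
    · rw [Finset.mul_sum]
      refine Finset.sum_congr rfl fun l _ => ?_
      rw [Finset.mul_sum]
      exact Finset.sum_congr rfl fun m _ => by ring
    · have hcol : ∀ l : Fin r,
          (∑ m : Fin r, A l m * (if l = m then ((t:ℝ):ℂ) else 0))
            = A l l * ((t:ℝ):ℂ) := by
        intro l
        rw [Finset.sum_eq_single l]
        · simp
        · intro m _ hm; simp [Ne.symm hm]
        · intro hl; exact absurd (Finset.mem_univ l) hl
      simp only [hcol]
      have : ∀ l : Fin r, A l l * ((t:ℝ):ℂ) = ((t:ℝ):ℂ) * ((a l : ℝ):ℂ) := by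
        intro l; rw [(hdiag l).1]; ring
      simp only [this]
      rw [← Finset.mul_sum, hT]
      push_cast
      ring
  have hτ : τ = c₀ * (N * S + t * T) := by
    rw [← h1, hsum_split]
    simp [Complex.add_re, Complex.mul_re, Complex.ofReal_re, Complex.ofReal_im, hS]
  -- Cauchy–Schwarz bound on S
  have hSbd : R * S ^ 2 ≤ (R - 1) * T ^ 2 * V := by
    set B : Matrix (Fin r) (Fin r) ℂ :=
      Matrix.of fun l m => A l m - (if l = m then ((T/R : ℝ):ℂ) else 0) with hB
    have hS_eq : (∑ l : Fin r, ∑ m : Fin r, A l m * v l m)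
        = ∑ l : Fin r, ∑ m : Fin r, B l m * v l m := by
      simp only [hB, of_apply, sub_mul, ite_mul, zero_mul, Finset.sum_sub_distrib]
      have hz : (∑ l : Fin r, ∑ m : Fin r,
          (if l = m then ((T/R : ℝ):ℂ) * v l m else 0)) = 0 := by
        have hcol : ∀ l : Fin r, (∑ m : Fin r,
            if l = m then ((T/R : ℝ):ℂ) * v l m else 0) = ((T/R : ℝ):ℂ) * v l l := by
          intro l; simp
        simp only [hcol]
        rw [← Finset.mul_sum]
        have : (∑ l : Fin r, v l l) = 0 := by
          simpa [trace, Matrix.diag] using hvtr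
        rw [this, mul_zero]
      rw [hz, sub_zero]
    have habsS : |S| ≤ ∑ l : Fin r, ∑ m : Fin r,
        ‖B l m‖ * ‖v l m‖ := by
      rw [hS, hS_eq]
      calc |(∑ l : Fin r, ∑ m : Fin r, B l m * v l m).re|
          ≤ ‖∑ l : Fin r, ∑ m : Fin r, B l m * v l m‖ :=
            Complex.abs_re_le_norm _
        _ ≤ ∑ l : Fin r, ‖∑ m : Fin r, B l m * v l m‖ :=
            norm_sum_le _ _
        _ ≤ ∑ l : Fin r, ∑ m : Fin r, ‖B l m * v l m‖ :=
            Finset.sum_le_sum fun l _ => norm_sum_le _ _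
        _ = ∑ l : Fin r, ∑ m : Fin r, ‖B l m‖ * ‖v l m‖ := by
            simp [norm_mul]
    have hCS : (∑ l : Fin r, ∑ m : Fin r, ‖B l m‖ * ‖v l m‖) ^ 2
        ≤ (∑ l : Fin r, ∑ m : Fin r, ‖B l m‖ ^ 2) * V := by
      rw [hV, ← Finset.sum_product', ← Finset.sum_product', ← Finset.sum_product']
      exact Finset.sum_mul_sq_le_sq_mul_sq _ _ _
    have hWle : (∑ l : Fin r, ∑ m : Fin r, ‖B l m‖ ^ 2)
        ≤ T ^ 2 - T ^ 2 / R := by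
      have hBentry : ∀ l m, ‖B l m‖ ^ 2
          = ‖A l m‖ ^ 2
            + (if l = m then (a l - T/R)^2 - (a l)^2 else 0) := by
        intro l m
        by_cases hlm : l = m
        · subst hlm
          simp only [hB, of_apply, eq_self_iff_true, if_true, ite_true]
          have : A l l - ((T/R : ℝ):ℂ) = ((a l - T/R : ℝ) : ℂ) := by
            rw [(hdiag l).1]; push_cast; ring
          rw [this, (hdiag l).1]
          rw [Complex.sq_norm, Complex.sq_norm, Complex.normSq_ofReal, Complex.normSq_ofReal]
          ring
        · simp [hB, hlm]
      simp only [hBentry, Finset.sum_add_distrib]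
      have hcol : ∀ l : Fin r, (∑ m : Fin r,
          if l = m then (a l - T/R)^2 - (a l)^2 else 0) = (a l - T/R)^2 - (a l)^2 := by
        intro l; simp
      simp only [hcol]
      have hexp : ∀ l : Fin r, (a l - T/R)^2 - (a l)^2 = (T/R)^2 - 2*(T/R)*(a l) := by
        intro l; ring
      simp only [hexp]
      rw [Finset.sum_sub_distrib, Finset.sum_const, Finset.card_univ, Fintype.card_fin,
        ← Finset.mul_sum, ← hT]
      have hRne : R ≠ 0 := ne_of_gt hRpos
      have heq : R * (T/R)^2 - 2*(T/R)*T = -(T^2/R) := by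
        field_simp; ring
      rw [nsmul_eq_mul, ← hR, heq]
      have := hA2
      linarith
    have hS2 : S ^ 2 ≤ (T ^ 2 - T ^ 2 / R) * V := by
      have h0 : S ^ 2 = |S| ^ 2 := (sq_abs S).symm
      rw [h0]
      calc |S| ^ 2 ≤ (∑ l : Fin r, ∑ m : Fin r,
            ‖B l m‖ * ‖v l m‖) ^ 2 := by
            exact pow_le_pow_left₀ (abs_nonneg S) habsS 2
        _ ≤ (∑ l : Fin r, ∑ m : Fin r, ‖B l m‖ ^ 2) * V := hCS
        _ ≤ (T ^ 2 - T ^ 2 / R) * V := mul_le_mul_of_nonneg_right hWle hVnn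
    have hkey : R * (T ^ 2 - T ^ 2 / R) = (R - 1) * T ^ 2 := by
      field_simp
    calc R * S ^ 2 ≤ R * ((T ^ 2 - T ^ 2 / R) * V) :=
          mul_le_mul_of_nonneg_left hS2 hRpos.le
      _ = (R - 1) * T ^ 2 * V := by rw [← mul_assoc, hkey]
  -- final arithmetic
  have ht : t * T = τ / c₀ - N * S := by
    rw [hτ, mul_comm c₀ (N * S + t * T), mul_div_assoc, div_self (ne_of_gt hc₀), mul_one]
    ring
  rw [hnorm]
  have hT2 : (0:ℝ) < T ^ 2 := by positivity
  have hq : (0:ℝ) ≤ τ ^ 2 / c₀ ^ 2 := by positivity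
  have hNsq : (1:ℝ) ≤ N ^ 2 := by nlinarith
  have hRt : R * t ^ 2 * T ^ 2
      ≤ 2 * R * (τ ^ 2 / c₀ ^ 2) + 2 * N ^ 2 * ((R - 1) * T ^ 2 * V) := by
    have h1' : R * t ^ 2 * T ^ 2 = R * (t * T) ^ 2 := by ring
    rw [h1', ht]
    have hsq : (τ / c₀ - N * S) ^ 2 ≤ 2 * (τ / c₀) ^ 2 + 2 * (N * S) ^ 2 := by
      nlinarith [sq_nonneg (τ / c₀ + N * S)]
    have hts : (τ / c₀) ^ 2 = τ ^ 2 / c₀ ^ 2 := by rw [div_pow]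
    calc R * (τ / c₀ - N * S) ^ 2
        ≤ R * (2 * (τ / c₀) ^ 2 + 2 * (N * S) ^ 2) :=
          mul_le_mul_of_nonneg_left hsq hRpos.le
      _ = 2 * R * (τ ^ 2 / c₀ ^ 2) + 2 * N ^ 2 * (R * S ^ 2) := by rw [← hts]; ring
      _ ≤ 2 * R * (τ ^ 2 / c₀ ^ 2) + 2 * N ^ 2 * ((R - 1) * T ^ 2 * V) := by
          nlinarith [hSbd, sq_nonneg N]
  have h2R : (2:ℝ) ≤ N ^ 2 * (R ^ 2 + 1) := by
    have h22 : (1:ℝ) * 2 ≤ N ^ 2 * (R ^ 2 + 1) :=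
      mul_le_mul hNsq (by nlinarith) (by norm_num) (le_trans zero_le_one hNsq)
    linarith
  have hbig : (0:ℝ) ≤ 2 * R * (N ^ 2 * (R ^ 2 + 1) - 1) := by
    have hx : (0:ℝ) ≤ N ^ 2 * (R ^ 2 + 1) - 1 := by linarith
    nlinarith [mul_nonneg hRpos.le hx]
  have hgoal : (N ^ 2 * V + R * t ^ 2) * T ^ 2
      ≤ (N ^ 2 * (R ^ 2 + 1) * (2 * R / (c₀ ^ 2 * T ^ 2) * τ ^ 2 + V)) * T ^ 2 := by
    have e : (N ^ 2 * (R ^ 2 + 1) * (2 * R / (c₀ ^ 2 * T ^ 2) * τ ^ 2 + V)) * T ^ 2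
        = N ^ 2 * (R ^ 2 + 1) * (2 * R * (τ ^ 2 / c₀ ^ 2) + V * T ^ 2) := by
      field_simp
    rw [e]
    nlinarith [hRt, hq, hNsq, hR1, hVnn, hT2.le, mul_nonneg hVnn hT2.le,
      mul_nonneg (mul_nonneg (sq_nonneg N) (mul_nonneg hVnn hT2.le)) (sq_nonneg (R - 1)),
      mul_nonneg hq hbig]
  exact le_of_mul_le_mul_right hgoal hT2
end
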